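/- arXiv:math/0612548 — 4 statements merged into one kernel-verified Lean document; each statement's English description precedes it below -/
import Mathlib

section
/- Let z be a homogeneous element of degree n ≥ 1 of T. Then z belongs to the free Lie algebra L if and only if γ(z) = z. (Friedrichs–Specht–Wever criterion.) -/
noncomputable section

open scoped BigOperators

variable (K : Type) [Field K] [CharZero K]

attribute [local instance 100] LieRing.ofAssociativeRing
attribute [local instance 100] LieAlgebra.ofAssociativeAlgebra

/-- The free associative algebra `T = K⟨x,y⟩`, realized as the monoid algebra of the
free monoid on two generators. -/
abbrev T := MonoidAlgebra K (FreeMonoid (Fin 2))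

/-- The word `v₁⋯vₙ` (a list of letters) as an element of `T`. -/
def word (l : List (Fin 2)) : T K := MonoidAlgebra.single (FreeMonoid.ofList l) 1

/-- The generator `x`. -/
def X : T K := word K [0]

/-- The generator `y`. -/
def Y : T K := word K [1]

/-- Right-nested bracket `[v₁,[v₂,…,[vₙ₋₁,vₙ]…]]` of a word. -/
def brList : List (Fin 2) → T K
  | [] => 0
  | [v] => word K [v]
  | v :: rest => word K [v] * brList rest - brList rest * word K [v]

/-- The Dynkin map `γ : T → T`, sending a word `v₁⋯vₙ` to
`(1/n)[v₁,[v₂,…,[vₙ₋₁,vₙ]…]]` (and `1 ↦ 0`). -/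
def dynkin : T K →ₗ[K] T K :=
  (Finsupp.linearCombination K fun w : FreeMonoid (Fin 2) =>
    ((w.toList.length : K)⁻¹) • brList K w.toList)
  ∘ₗ (MonoidAlgebra.coeffLinearEquiv K).toLinearMap

/-- The free Lie algebra `L` on `x, y`, as the Lie subalgebra of `T` generated by `x` and `y`. -/
def L : LieSubalgebra K (T K) := LieSubalgebra.lieSpan K (T K) {X K, Y K}

/-- The degree-`n` homogeneous component `T_n` of `T`, spanned by the words of length `n`. -/
def homog (n : ℕ) : Submodule K (T K) :=
  Submodule.span K { t | ∃ l : List (Fin 2), l.length = n ∧ t = word K l }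

/-- The value `σ(i)` of a permutation of `{0,…,n-1}` on a natural number (junk value `0`
outside the range). -/
def permVal {n : ℕ} (σ : Equiv.Perm (Fin n)) (i : ℕ) : ℕ :=
  if h : i < n then (σ ⟨i, h⟩ : ℕ) else 0

/-- The (0-indexed) descent set of a permutation: positions `i ∈ {0,…,n-2}` with
`σ(i) > σ(i+1)`. -/
def descSet {n : ℕ} (σ : Equiv.Perm (Fin n)) : Finset ℕ :=
  (Finset.range (n - 1)).filter fun i => permVal σ (i + 1) < permVal σ i

/-- The number of descents of a permutation. -/
def descNum {n : ℕ} (σ : Equiv.Perm (Fin n)) : ℕ := (descSet σ).card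

/-- `DSet n k` is the set of permutations of `{0,…,n-1}` whose descent set is exactly
the first `k` positions (this is `D_{1..k}` of the paper, in 0-indexed form). -/
def DSet (n k : ℕ) : Finset (Equiv.Perm (Fin n)) :=
  Finset.univ.filter fun σ => descSet σ = Finset.range k

/-- The Eulerian coefficient `c_σ = (-1)^{d(σ)} (binom (n-1) (d σ))⁻¹`. -/
def eulCoeff {n : ℕ} (σ : Equiv.Perm (Fin n)) : K :=
  (-1 : K) ^ descNum σ * ((Nat.choose (n - 1) (descNum σ) : K))⁻¹

/-- The degree-`n` Eulerian idempotent applied to the word `w₁⋯wₙ` given by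
`v : Fin n → Fin 2`: `eₙ(w) = Σ_σ c_σ w^σ`. -/
def eul (n : ℕ) (v : Fin n → Fin 2) : T K :=
  ∑ σ : Equiv.Perm (Fin n), eulCoeff K σ • word K (List.ofFn fun i => v (σ i))

/-- The `a`-part of an element of `T`: the linear map sending a word `a·w ↦ w` and
any word not starting with the letter `a` (or the empty word) to `0`.  For `p` with zero
constant term, `p = x·(letterPart 0 p) + y·(letterPart 1 p)`. -/
def letterPart (a : Fin 2) : T K →ₗ[K] T K :=
  (Finsupp.linearCombination K fun w : FreeMonoid (Fin 2) =>
    match w.toList with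
    | [] => 0
    | b :: rest => if b = a then word K rest else 0)
  ∘ₗ (MonoidAlgebra.coeffLinearEquiv K).toLinearMap

/-- The algebra endomorphism `s : T → T` with `s(x) = -y`, `s(y) = -x`. -/
def sMap : T K →ₐ[K] T K :=
  MonoidAlgebra.lift K (T K) (FreeMonoid (Fin 2))
    (FreeMonoid.lift fun a : Fin 2 => if a = 0 then -(Y K) else -(X K))



/-!
Let `D` (`bracketing`) send a word to its right-nested bracket and let `E` (`degreeOp`) multiply
a word by its length. For `q` without constant term, `D (p * q) = ρ p (D q)`, where
`ρ : T → End T` (`adLift`) is the algebra map extending `v ↦ ad v` on letters. On the Lie algebra `L`, `ρ` agrees with `ad` because both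
are Lie algebra maps, so there `D [a, b] = [a, D b] - [b, D a]`; the derivation `E` satisfies
the same rule, and `D = E` on `x, y`, hence `D = E` on all of `L`. On `T_n` we have `γ = D / n`
and `E = n`, which gives `γ z = z` for `z ∈ L ∩ T_n`; conversely `γ` takes values in `L`.
-/

omit [CharZero K]

lemma word_mul (u w : List (Fin 2)) : word K u * word K w = word K (u ++ w) := by
  simp [word, MonoidAlgebra.single_mul_single, FreeMonoid.ofList_append]

lemma word_nil : word K [] = 1 := rfl

lemma word_cons (a : Fin 2) (u : List (Fin 2)) : word K (a :: u) = word K [a] * word K u := by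
  rw [word_mul, List.singleton_append]

@[elab_as_elim]
lemma word_induction {P : T K → Prop} (p : T K) (zero : P 0)
    (add : ∀ p q, P p → P q → P (p + q)) (smul_word : ∀ (c : K) l, P (c • word K l)) :
    P p := by
  induction p using MonoidAlgebra.induction_linear with
  | zero => exact zero
  | add p q hp hq => exact add p q hp hq
  | single w c =>
    simpa [word, MonoidAlgebra.smul_single'] using smul_word c w.toList

def wordLinear (f : List (Fin 2) → T K) : T K →ₗ[K] T K :=
  Finsupp.linearCombination K (fun w : FreeMonoid (Fin 2) => f w.toList)
    ∘ₗ (MonoidAlgebra.coeffLinearEquiv K).toLinearMap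

lemma wordLinear_word (f : List (Fin 2) → T K) (l : List (Fin 2)) :
    wordLinear K f (word K l) = f l := by
  simp [wordLinear, word, MonoidAlgebra.coeffLinearEquiv]

lemma dynkin_eq_wordLinear :
    dynkin K = wordLinear K fun l => (l.length : K)⁻¹ • brList K l := rfl

lemma brList_cons (a : Fin 2) {l : List (Fin 2)} (hl : l ≠ []) :
    brList K (a :: l) = word K [a] * brList K l - brList K l * word K [a] := by
  cases l with
  | nil => exact absurd rfl hl
  | cons b t => rfl

def bracketing : T K →ₗ[K] T K := wordLinear K (brList K)

def degreeOp : T K →ₗ[K] T K := wordLinear K fun l => (l.length : K) • word K l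

def augmentation : T K →ₐ[K] K :=
  MonoidAlgebra.lift K K (FreeMonoid (Fin 2)) (FreeMonoid.lift fun _ => 0)

def adLift : T K →ₐ[K] Module.End K (T K) :=
  MonoidAlgebra.lift K _ (FreeMonoid (Fin 2))
    (FreeMonoid.lift fun a => LieAlgebra.ad K (T K) (word K [a]))

lemma augmentation_word_cons (a : Fin 2) (l : List (Fin 2)) :
    augmentation K (word K (a :: l)) = 0 := by
  simp [augmentation, word]

lemma adLift_letter (a : Fin 2) :
    adLift K (word K [a]) = LieAlgebra.ad K (T K) (word K [a]) := by
  simp [adLift, word]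

lemma exists_letter_of_mem_generators {x : T K} (hx : x ∈ ({X K, Y K} : Set (T K))) :
    ∃ a, x = word K [a] := by
  rcases hx with rfl | rfl
  exacts [⟨0, rfl⟩, ⟨1, rfl⟩]

lemma letter_mem_L (a : Fin 2) : word K [a] ∈ L K := by
  apply LieSubalgebra.subset_lieSpan
  fin_cases a
  exacts [Or.inl rfl, Or.inr rfl]

lemma augmentation_eq_zero_of_mem_L {u : T K} (hu : u ∈ L K) : augmentation K u = 0 := by
  induction hu using LieSubalgebra.lieSpan_induction with
  | mem x hx =>
    obtain ⟨a, rfl⟩ := exists_letter_of_mem_generators K hx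
    exact augmentation_word_cons K a []
  | zero => exact map_zero _
  | add x y _ _ hx hy => rw [map_add, hx, hy, add_zero]
  | smul c x _ hx => rw [map_smul, hx, smul_zero]
  | lie x y _ _ _ _ => rw [Ring.lie_def, map_sub, map_mul, map_mul, mul_comm, sub_self]

lemma adLift_eq_ad_of_mem_L {u : T K} (hu : u ∈ L K) :
    adLift K u = LieAlgebra.ad K (T K) u := by
  induction hu using LieSubalgebra.lieSpan_induction with
  | mem x hx =>
    obtain ⟨a, rfl⟩ := exists_letter_of_mem_generators K hx
    exact adLift_letter K a
  | zero => simp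
  | add x y _ _ hx hy => rw [map_add, map_add, hx, hy]
  | smul c x _ hx => rw [map_smul, map_smul, hx]
  | lie x y _ _ hx hy =>
    rw [LieHom.map_lie, Ring.lie_def, Ring.lie_def, map_sub, map_mul, map_mul, hx, hy]

lemma degreeOp_word (l : List (Fin 2)) : degreeOp K (word K l) = (l.length : K) • word K l :=
  wordLinear_word K _ l

lemma degreeOp_mul (p q : T K) : degreeOp K (p * q) = degreeOp K p * q + p * degreeOp K q := by
  induction p using word_induction K with
  | zero => simp
  | add p p' hp hp' => simp only [add_mul, map_add, hp, hp']; abel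
  | smul_word c u =>
    induction q using word_induction K with
    | zero => simp
    | add q q' hq hq' => simp only [mul_add, map_add, hq, hq']; abel
    | smul_word d w =>
      simp only [smul_mul_assoc, mul_smul_comm, map_smul, word_mul, degreeOp_word,
        List.length_append, Nat.cast_add, add_smul, smul_add, smul_comm c]

lemma bracketing_word (l : List (Fin 2)) : bracketing K (word K l) = brList K l :=
  wordLinear_word K _ l

lemma bracketing_one : bracketing K 1 = 0 := bracketing_word K []

lemma bracketing_word_mul_word (u : List (Fin 2)) {l : List (Fin 2)} (hl : l ≠ []) :
    bracketing K (word K u * word K l) = adLift K (word K u) (bracketing K (word K l)) := by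
  induction u with
  | nil => rw [word_nil, one_mul, map_one, Module.End.one_apply]
  | cons a u ih =>
    rw [word_mul, List.cons_append, bracketing_word, brList_cons K a (by simp [hl]),
      word_cons K a u, map_mul, Module.End.mul_apply, ← ih, adLift_letter, word_mul,
      bracketing_word, LieAlgebra.ad_apply, Ring.lie_def]

lemma bracketing_mul (p q : T K) :
    bracketing K (p * q) = adLift K p (bracketing K q) + augmentation K q • bracketing K p := by
  induction p using word_induction K with
  | zero => simp
  | add p p' hp hp' =>
    simp only [add_mul, map_add, hp, hp', LinearMap.add_apply, smul_add]
    abel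
  | smul_word c u =>
    induction q using word_induction K with
    | zero => simp
    | add q q' hq hq' => simp only [mul_add, map_add, hq, hq', add_smul]; abel
    | smul_word d w =>
      simp only [smul_mul_assoc, mul_smul_comm, map_smul, LinearMap.smul_apply]
      cases w with
      | nil => simp [word_nil, bracketing_one]
      | cons a w =>
        rw [bracketing_word_mul_word K u (List.cons_ne_nil a w), augmentation_word_cons,
          smul_zero, zero_smul, add_zero]

lemma bracketing_eq_degreeOp_of_mem_L {u : T K} (hu : u ∈ L K) :
    bracketing K u = degreeOp K u := by
  induction hu using LieSubalgebra.lieSpan_induction with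
  | mem x hx =>
    obtain ⟨a, rfl⟩ := exists_letter_of_mem_generators K hx
    rw [bracketing_word, degreeOp_word, List.length_singleton, Nat.cast_one, one_smul]
    rfl
  | zero => simp
  | add x y _ _ hx hy => rw [map_add, map_add, hx, hy]
  | smul c x _ hx => rw [map_smul, map_smul, hx]
  | lie x y hxL hyL hx hy =>
    rw [Ring.lie_def, map_sub, map_sub, bracketing_mul, bracketing_mul,
      augmentation_eq_zero_of_mem_L K hxL, augmentation_eq_zero_of_mem_L K hyL,
      adLift_eq_ad_of_mem_L K hxL, adLift_eq_ad_of_mem_L K hyL, hx, hy, degreeOp_mul,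
      degreeOp_mul, LieAlgebra.ad_apply, LieAlgebra.ad_apply, Ring.lie_def, Ring.lie_def]
    simp only [zero_smul, add_zero]
    abel

lemma brList_mem_L (l : List (Fin 2)) : brList K l ∈ L K := by
  induction l with
  | nil => exact (L K).zero_mem
  | cons a l ih =>
    cases l with
    | nil => exact letter_mem_L K a
    | cons b l =>
      rw [brList_cons K a (List.cons_ne_nil b l), ← Ring.lie_def]
      exact (L K).lie_mem (letter_mem_L K a) ih

lemma dynkin_mem_L (p : T K) : dynkin K p ∈ L K := by
  induction p using word_induction K with
  | zero => rw [map_zero]; exact (L K).zero_mem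
  | add p q hp hq => rw [map_add]; exact (L K).add_mem hp hq
  | smul_word c l =>
    rw [map_smul, dynkin_eq_wordLinear, wordLinear_word]
    exact (L K).smul_mem c ((L K).smul_mem _ (brList_mem_L K l))

lemma degreeOp_eq_smul_of_mem_homog {n : ℕ} {z : T K} (hz : z ∈ homog K n) :
    degreeOp K z = (n : K) • z := by
  refine LinearMap.eqOn_span' (g := (n : K) • LinearMap.id) ?_ hz
  rintro _ ⟨l, rfl, rfl⟩
  exact degreeOp_word K l

lemma dynkin_eq_inv_smul_bracketing_of_mem_homog {n : ℕ} {z : T K} (hz : z ∈ homog K n) :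
    dynkin K z = (n : K)⁻¹ • bracketing K z := by
  refine LinearMap.eqOn_span' (g := (n : K)⁻¹ • bracketing K) ?_ hz
  rintro _ ⟨l, rfl, rfl⟩
  rw [dynkin_eq_wordLinear, wordLinear_word, LinearMap.smul_apply, bracketing_word]

variable [CharZero K]

/-- **Friedrichs–Specht–Wever criterion.**  A homogeneous element `z` of degree `n ≥ 1`
of `T` belongs to the free Lie algebra `L` if and only if `γ(z) = z`. -/
theorem stmt0 (n : ℕ) (hn : 1 ≤ n) (z : T K) (hz : z ∈ homog K n) :
    z ∈ L K ↔ dynkin K z = z := by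
  refine ⟨fun hzL => ?_, fun h => h ▸ dynkin_mem_L K z⟩
  have hn0 : (n : K) ≠ 0 := Nat.cast_ne_zero.mpr (by omega)
  rw [dynkin_eq_inv_smul_bracketing_of_mem_homog K hz, bracketing_eq_degreeOp_of_mem_L K hzL,
    degreeOp_eq_smul_of_mem_homog K hz, inv_smul_smul₀ hn0]

end
end

section
/- For every n ≥ 1 and every word v₁⋯vₙ of length n in the letters x and y, the Dynkin map is given in terms of permutations by: γ(v₁⋯vₙ) = ((−1)^{n−1}/n) · Σ_{k=0}^{n−1} (−1)^k Σ_{σ ∈ D_{1..k}} (vₙvₙ₋₁⋯v₁)^σ. -/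
noncomputable section

open scoped BigOperators

variable (K : Type) [Field K] [CharZero K]

attribute [local instance 100] LieRing.ofAssociativeRing

/-!
A permutation has descent set `{1,…,k}` for some `k` exactly when it is V-shaped,
`σ(1) > ⋯ > σ(k+1) < ⋯ < σ(n)`, and then `k` is its number of descents. In a V-shaped
permutation of `{1,…,n+1}` the value `n+1` sits at the first or at the last position, and deleting
it leaves a V-shaped permutation of `{1,…,n}` with one descent less, respectively the same
descents. Reading `vₙ₊₁⋯v₁` through `σ`, this puts the letter `v₁` at the front or at the back of
the word, which is the recursion `[v₁, b] = v₁ b - b v₁` of the right-nested bracket; induction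
on `n` then gives `[v₁,[v₂,…,vₙ]…] = (-1)^(n-1) Σ_σ (-1)^d(σ) (vₙ⋯v₁)^σ` over V-shaped `σ`.
-/

lemma finRotate_symm_zero {n : ℕ} : (finRotate (n + 1)).symm 0 = Fin.last n := by
  rw [Equiv.symm_apply_eq, finRotate_last]

lemma finRotate_symm_succ {n : ℕ} (i : Fin n) : (finRotate (n + 1)).symm i.succ = i.castSucc := by
  rw [Equiv.symm_apply_eq, finRotate_apply, Fin.coeSucc_eq_succ]

namespace Equiv.Perm

variable {n : ℕ}

def snocLast (τ : Perm (Fin n)) : Perm (Fin (n + 1)) :=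
  permCongr finSuccEquivLast.symm τ.optionCongr

def consLast (τ : Perm (Fin n)) : Perm (Fin (n + 1)) :=
  snocLast τ * (finRotate (n + 1))⁻¹

def restrictLast (σ : Perm (Fin (n + 1))) : Perm (Fin n) :=
  removeNone (permCongr finSuccEquivLast σ)

@[simp]
lemma snocLast_castSucc (τ : Perm (Fin n)) (i : Fin n) :
    snocLast τ i.castSucc = (τ i).castSucc := by
  simp [snocLast, permCongr_apply]

@[simp]
lemma snocLast_last (τ : Perm (Fin n)) : snocLast τ (Fin.last n) = Fin.last n := by
  simp [snocLast, permCongr_apply]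

@[simp]
lemma consLast_zero (τ : Perm (Fin n)) : consLast τ 0 = Fin.last n := by
  rw [consLast, mul_apply, inv_def, finRotate_symm_zero, snocLast_last]

@[simp]
lemma consLast_succ (τ : Perm (Fin n)) (i : Fin n) : consLast τ i.succ = (τ i).castSucc := by
  rw [consLast, mul_apply, inv_def, finRotate_symm_succ, snocLast_castSucc]

@[simp]
lemma restrictLast_snocLast (τ : Perm (Fin n)) : restrictLast (snocLast τ) = τ := by
  rw [restrictLast, snocLast, ← permCongr_symm, apply_symm_apply, removeNone_optionCongr]

lemma snocLast_restrictLast {σ : Perm (Fin (n + 1))} (h : σ (Fin.last n) = Fin.last n) :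
    snocLast (restrictLast σ) = σ := by
  set ρ := permCongr finSuccEquivLast σ
  have hρ : ρ none = none := by simp [ρ, permCongr_apply, h]
  have hopt : (removeNone ρ).optionCongr = ρ := by
    have := decomposeOption.symm_apply_apply ρ
    rwa [decomposeOption_apply, decomposeOption_symm_apply, hρ, swap_self, ← one_def, one_mul]
      at this
  rw [snocLast, restrictLast, hopt, ← permCongr_symm, symm_apply_apply]

@[simp]
lemma restrictLast_consLast_mul_finRotate (τ : Perm (Fin n)) :
    restrictLast (consLast τ * finRotate (n + 1)) = τ := by
  simp [consLast]

lemma consLast_restrictLast {σ : Perm (Fin (n + 1))} (h : σ 0 = Fin.last n) :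
    consLast (restrictLast (σ * finRotate (n + 1))) = σ := by
  rw [consLast, snocLast_restrictLast (by simpa [finRotate_last] using h), mul_inv_cancel_right]

end Equiv.Perm

open Equiv Equiv.Perm Finset

section Descents

variable {n : ℕ}

lemma mem_descSet {σ : Perm (Fin n)} {i : ℕ} :
    i ∈ descSet σ ↔ ∃ h : i + 1 < n, σ ⟨i + 1, h⟩ < σ ⟨i, by omega⟩ := by
  rw [descSet, mem_filter, mem_range, permVal, permVal]
  constructor
  · rintro ⟨hi, hlt⟩
    rw [dif_pos (by omega), dif_pos (by omega)] at hlt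
    exact ⟨by omega, hlt⟩
  · rintro ⟨hi, hlt⟩
    exact ⟨by omega, by rwa [dif_pos hi, dif_pos (by omega)]⟩

lemma descSet_snocLast (τ : Perm (Fin n)) : descSet (snocLast τ) = descSet τ := by
  ext i
  simp only [mem_descSet]
  constructor
  · rintro ⟨h, hlt⟩
    have hi : i + 1 < n := by
      by_contra hge
      have hlast : (⟨i + 1, h⟩ : Fin (n + 1)) = Fin.last n := Fin.ext (by simp; omega)
      rw [hlast, snocLast_last] at hlt
      exact (Fin.le_last _).not_gt hlt
    refine ⟨hi, ?_⟩
    rwa [show (⟨i + 1, h⟩ : Fin (n + 1)) = Fin.castSucc ⟨i + 1, hi⟩ from rfl,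
      show (⟨i, _⟩ : Fin (n + 1)) = Fin.castSucc ⟨i, by omega⟩ from rfl, snocLast_castSucc,
      snocLast_castSucc, Fin.castSucc_lt_castSucc_iff] at hlt
  · rintro ⟨h, hlt⟩
    refine ⟨by omega, ?_⟩
    rwa [show (⟨i + 1, _⟩ : Fin (n + 1)) = Fin.castSucc ⟨i + 1, h⟩ from rfl,
      show (⟨i, _⟩ : Fin (n + 1)) = Fin.castSucc ⟨i, by omega⟩ from rfl, snocLast_castSucc,
      snocLast_castSucc, Fin.castSucc_lt_castSucc_iff]

lemma descSet_consLast (τ : Perm (Fin (n + 1))) :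
    descSet (consLast τ) = insert 0 ((descSet τ).map ⟨(· + 1), add_left_injective 1⟩) := by
  ext (_ | i)
  · simp only [mem_descSet, mem_insert, true_or, iff_true]
    refine ⟨by omega, ?_⟩
    rw [show (⟨0 + 1, _⟩ : Fin (n + 2)) = Fin.succ 0 from rfl, consLast_succ,
      show (⟨0, _⟩ : Fin (n + 2)) = 0 from rfl, consLast_zero]
    exact Fin.castSucc_lt_last _
  · simp only [mem_descSet, mem_insert, mem_map, Function.Embedding.coeFn_mk,
      Nat.add_right_cancel_iff, exists_eq_right, Nat.add_one_ne_zero, false_or]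
    constructor
    · rintro ⟨h, hlt⟩
      refine ⟨by omega, ?_⟩
      rwa [show (⟨i + 1 + 1, h⟩ : Fin (n + 2)) = Fin.succ ⟨i + 1, by omega⟩ from rfl,
        show (⟨i + 1, _⟩ : Fin (n + 2)) = Fin.succ ⟨i, by omega⟩ from rfl, consLast_succ,
        consLast_succ, Fin.castSucc_lt_castSucc_iff] at hlt
    · rintro ⟨h, hlt⟩
      refine ⟨by omega, ?_⟩
      rwa [show (⟨i + 1 + 1, _⟩ : Fin (n + 2)) = Fin.succ ⟨i + 1, h⟩ from rfl,
        show (⟨i + 1, _⟩ : Fin (n + 2)) = Fin.succ ⟨i, by omega⟩ from rfl, consLast_succ,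
        consLast_succ, Fin.castSucc_lt_castSucc_iff]

lemma descNum_lt (σ : Perm (Fin (n + 1))) : descNum σ < n + 1 :=
  Nat.lt_succ_of_le ((card_filter_le _ _).trans (card_range _).le)

lemma descNum_snocLast (τ : Perm (Fin n)) : descNum (snocLast τ) = descNum τ := by
  rw [descNum, descNum, descSet_snocLast]

lemma descNum_consLast (τ : Perm (Fin (n + 1))) : descNum (consLast τ) = descNum τ + 1 := by
  rw [descNum, descSet_consLast, card_insert_of_notMem (by simp), card_map, descNum]

end Descents

section VShaped

variable {n : ℕ}

def vShaped (n : ℕ) : Finset (Perm (Fin n)) :=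
  univ.filter fun σ => descSet σ = range (descNum σ)

lemma mem_vShaped {σ : Perm (Fin n)} : σ ∈ vShaped n ↔ descSet σ = range (descNum σ) := by
  simp [vShaped]

lemma DSet_eq_filter_vShaped (n k : ℕ) : DSet n k = (vShaped n).filter (descNum · = k) := by
  ext σ
  simp only [DSet, vShaped, mem_filter, mem_univ, true_and]
  constructor
  · intro h
    have hk : descNum σ = k := by rw [descNum, h, card_range]
    exact ⟨hk ▸ h, hk⟩
  · rintro ⟨h, rfl⟩
    exact h

lemma snocLast_mem_vShaped_iff {τ : Perm (Fin n)} :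
    snocLast τ ∈ vShaped (n + 1) ↔ τ ∈ vShaped n := by
  rw [mem_vShaped, mem_vShaped, descNum_snocLast, descSet_snocLast]

lemma consLast_mem_vShaped_iff {τ : Perm (Fin (n + 1))} :
    consLast τ ∈ vShaped (n + 2) ↔ τ ∈ vShaped (n + 1) := by
  rw [mem_vShaped, mem_vShaped, descNum_consLast, descSet_consLast, range_add_one']
  constructor
  · intro h
    simpa using congrArg (erase · 0) h
  · intro h
    rw [h]

lemma apply_zero_eq_last_or_apply_last_eq_last {σ : Perm (Fin (n + 1))}
    (hσ : σ ∈ vShaped (n + 1)) : σ 0 = Fin.last n ∨ σ (Fin.last n) = Fin.last n := by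
  rw [mem_vShaped] at hσ
  by_contra! h
  obtain ⟨p, hσp⟩ : ∃ p, σ p = Fin.last n := ⟨_, apply_symm_apply σ _⟩
  obtain ⟨j, hj⟩ : ∃ j, (p : ℕ) = j + 1 :=
    ⟨p - 1, by have := Fin.pos_iff_ne_zero.2 (fun h0 => h.1 (h0 ▸ hσp)); omega⟩
  have hjn : j + 1 < n := hj ▸ Fin.val_lt_last (fun hl => h.2 (hl ▸ hσp))
  have hpj : p = ⟨j + 1, by omega⟩ := Fin.ext hj
  have hj_not_mem : j ∉ descSet σ := by
    rw [mem_descSet]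
    rintro ⟨_, hlt⟩
    rw [← hpj, hσp] at hlt
    exact (Fin.le_last _).not_gt hlt
  have hj_mem : j + 1 ∈ descSet σ := by
    rw [mem_descSet]
    refine ⟨by omega, ?_⟩
    rw [← hpj, hσp, Fin.lt_last_iff_ne_last, ← hσp, Ne, σ.injective.eq_iff, Fin.ext_iff, hj]
    simp
  rw [hσ, mem_range] at hj_not_mem hj_mem
  omega

lemma sum_vShaped_succ_succ {M : Type*} [AddCommMonoid M] (F : Perm (Fin (n + 2)) → M) :
    ∑ σ ∈ vShaped (n + 2), F σ = ∑ τ ∈ vShaped (n + 1), (F (consLast τ) + F (snocLast τ)) := by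
  have last_of_ne {σ} (hσ : σ ∈ vShaped (n + 2)) (h0 : ¬σ 0 = Fin.last (n + 1)) :=
    (apply_zero_eq_last_or_apply_last_eq_last hσ).resolve_left h0
  rw [sum_add_distrib, ← sum_filter_add_sum_filter_not (vShaped (n + 2)) (· 0 = Fin.last (n + 1))]
  congr 1
  · refine (sum_nbij' consLast (fun σ => restrictLast (σ * finRotate (n + 2))) ?_ ?_
      (fun τ _ => restrictLast_consLast_mul_finRotate τ)
      (fun σ hσ => consLast_restrictLast (mem_filter.1 hσ).2) fun _ _ => rfl).symm
    · intro τ hτ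
      simp [consLast_mem_vShaped_iff, hτ]
    · intro σ hσ
      rw [mem_filter] at hσ
      rw [← consLast_mem_vShaped_iff, consLast_restrictLast hσ.2]
      exact hσ.1
  · refine (sum_nbij' snocLast restrictLast ?_ ?_ (fun τ _ => restrictLast_snocLast τ)
      (fun σ hσ => snocLast_restrictLast (last_of_ne (mem_filter.1 hσ).1 (mem_filter.1 hσ).2))
      fun _ _ => rfl).symm
    · intro τ hτ
      rw [mem_filter, snocLast_mem_vShaped_iff, show (0 : Fin (n + 2)) = Fin.castSucc 0 from rfl,
        snocLast_castSucc]
      exact ⟨hτ, (Fin.castSucc_lt_last _).ne⟩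
    · intro σ hσ
      rw [mem_filter] at hσ
      rw [← snocLast_mem_vShaped_iff, snocLast_restrictLast (last_of_ne hσ.1 hσ.2)]
      exact hσ.1

lemma sum_range_sum_DSet {M : Type*} [AddCommMonoid M] (g : ℕ → Perm (Fin (n + 1)) → M) :
    ∑ k ∈ range (n + 1), ∑ σ ∈ DSet (n + 1) k, g k σ = ∑ σ ∈ vShaped (n + 1), g (descNum σ) σ := by
  rw [← sum_fiberwise_of_maps_to (g := descNum) (t := range (n + 1))
    (fun σ _ => mem_range.2 (descNum_lt σ))]
  refine sum_congr rfl fun k _ => ?_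
  rw [DSet_eq_filter_vShaped]
  exact sum_congr rfl fun σ hσ => by rw [(mem_filter.1 hσ).2]

end VShaped

section Words

omit [CharZero K]

lemma word_append (l₁ l₂ : List (Fin 2)) : word K (l₁ ++ l₂) = word K l₁ * word K l₂ := by
  rw [word, word, word, MonoidAlgebra.single_mul_single, one_mul]
  rfl

lemma dynkin_word (l : List (Fin 2)) : dynkin K (word K l) = (l.length : K)⁻¹ • brList K l := by
  unfold dynkin word
  erw [Finsupp.linearCombination_single]
  rw [one_smul, FreeMonoid.toList_ofList]

lemma brList_ofFn_succ {n : ℕ} (v : Fin (n + 2) → Fin 2) :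
    brList K (List.ofFn v) = word K [v 0] * brList K (List.ofFn fun i => v i.succ) -
      brList K (List.ofFn fun i => v i.succ) * word K [v 0] := by
  rw [List.ofFn_succ, List.ofFn_succ]
  rfl

lemma word_ofFn_consLast {n : ℕ} (v : Fin (n + 2) → Fin 2) (τ : Perm (Fin (n + 1))) :
    word K (List.ofFn fun i => v (consLast τ i).rev) =
      word K [v 0] * word K (List.ofFn fun i => v (τ i).rev.succ) := by
  rw [← word_append, List.ofFn_succ, consLast_zero, Fin.rev_last]
  simp [Fin.rev_castSucc]

lemma word_ofFn_snocLast {n : ℕ} (v : Fin (n + 2) → Fin 2) (τ : Perm (Fin (n + 1))) :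
    word K (List.ofFn fun i => v (snocLast τ i).rev) =
      word K (List.ofFn fun i => v (τ i).rev.succ) * word K [v 0] := by
  rw [← word_append, List.ofFn_succ', snocLast_last, Fin.rev_last]
  simp [Fin.rev_castSucc]

lemma brList_ofFn_eq_sum_vShaped (n : ℕ) (v : Fin (n + 1) → Fin 2) :
    brList K (List.ofFn v) = (-1 : K) ^ n •
      ∑ σ ∈ vShaped (n + 1), (-1 : K) ^ descNum σ • word K (List.ofFn fun i => v (σ i).rev) := by
  induction n with
  | zero =>
    have hone : vShaped 1 = {1} := by decide
    simp [hone, descNum, descSet, brList]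
  | succ n ih =>
    rw [brList_ofFn_succ, ih, sum_vShaped_succ_succ]
    simp only [word_ofFn_consLast, word_ofFn_snocLast, descNum_consLast, descNum_snocLast,
      smul_sum, mul_sum, sum_mul, ← sum_sub_distrib]
    refine sum_congr rfl fun τ _ => ?_
    simp only [mul_smul_comm, smul_mul_assoc, pow_succ]
    module

end Words

theorem stmt3 (n : ℕ) (v : Fin n → Fin 2) :
    dynkin K (word K (List.ofFn v)) =
      (((-1 : K) ^ (n - 1)) / (n : K)) •
        ∑ k ∈ Finset.range n, (-1 : K) ^ k •
          ∑ σ ∈ DSet n k, word K (List.ofFn fun i => v (σ i).rev) := by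
  rcases n with _ | n
  · simp [dynkin_word, brList]
  rw [dynkin_word, List.length_ofFn, brList_ofFn_eq_sum_vShaped, smul_smul, Nat.add_sub_cancel,
    div_eq_mul_inv, mul_comm]
  congr 1
  simp only [smul_sum]
  exact (sum_range_sum_DSet fun k σ => (-1 : K) ^ k • word K (List.ofFn fun i => v (σ i).rev)).symm

end
end

section
/- The kernel of the operator ad x : T → T, p ↦ xp − px, is exactly the K-span of the powers xⁿ (n ≥ 0), i.e. the polynomial subalgebra K[x] of T. -/
noncomputable section

open scoped BigOperators

variable (K : Type) [Field K] [CharZero K]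

section
attribute [local instance] LieRing.ofAssociativeRing
end

/-!
Write `x = single (of a) 1`. Comparing the coefficients of `x * p = p * x` at `b·w·a` shows that
`p` has no word starting with a letter `b ≠ a`, and at `a·w·a` that the coefficients of `a·w`
and `w·a` agree. Rotating the leading `a`'s of a word to its end therefore moves any other
letter to the front, so only the powers of `a` can occur in `p`.
-/

namespace MonoidAlgebra

variable {R α : Type*} [Semiring R] {a : α} {p : MonoidAlgebra R (FreeMonoid α)}
  (h : Commute (single (FreeMonoid.of a) 1) p)
include h

theorem coeff_of_mul_eq_coeff_mul_of_of_commute (w : FreeMonoid α) :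
    p.coeff (FreeMonoid.of a * w) = p.coeff (w * FreeMonoid.of a) :=
  calc p.coeff (FreeMonoid.of a * w)
    _ = (p * single (FreeMonoid.of a) 1).coeff ((FreeMonoid.of a * w) * FreeMonoid.of a) := by
      rw [coeff_mul_single_mul, mul_one]
    _ = (single (FreeMonoid.of a) 1 * p).coeff (FreeMonoid.of a * (w * FreeMonoid.of a)) := by
      rw [← h.eq, mul_assoc]
    _ = p.coeff (w * FreeMonoid.of a) := by rw [coeff_single_mul_mul, one_mul]

theorem coeff_of_mul_eq_zero_of_commute {b : α} (hb : b ≠ a) (w : FreeMonoid α) :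
    p.coeff (FreeMonoid.of b * w) = 0 :=
  calc p.coeff (FreeMonoid.of b * w)
    _ = (p * single (FreeMonoid.of a) 1).coeff ((FreeMonoid.of b * w) * FreeMonoid.of a) := by
      rw [coeff_mul_single_mul, mul_one]
    _ = (single (FreeMonoid.of a) 1 * p).coeff ((FreeMonoid.of b * w) * FreeMonoid.of a) := by
      rw [h.eq]
    _ = 0 := coeff_single_mul_of_forall_mul_ne _ _ fun d hd =>
      hb (List.cons_eq_cons.mp (congrArg FreeMonoid.toList hd)).1.symm

theorem coeff_mul_of_pow_eq_zero_of_commute {w : FreeMonoid α}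
    (hw : w ∉ Set.range (FreeMonoid.of a ^ ·)) (k : ℕ) :
    p.coeff (w * FreeMonoid.of a ^ k) = 0 := by
  induction w using FreeMonoid.inductionOn' generalizing k with
  | one => exact absurd ⟨0, pow_zero _⟩ hw
  | of_mul b u ih =>
    by_cases hb : b = a
    · subst hb
      have hu : u ∉ Set.range (FreeMonoid.of b ^ ·) := by
        rintro ⟨n, rfl⟩
        exact hw ⟨n + 1, pow_succ' _ _⟩
      rw [mul_assoc, coeff_of_mul_eq_coeff_mul_of_of_commute h, mul_assoc, ← pow_succ]
      exact ih hu (k + 1)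
    · rw [mul_assoc]
      exact coeff_of_mul_eq_zero_of_commute h hb _

theorem mem_span_range_pow_of_commute :
    p ∈ Submodule.span R (Set.range (single (FreeMonoid.of a) (1 : R) ^ ·)) := by
  rw [← sum_coeff_single p]
  refine Submodule.sum_mem _ fun w hw => ?_
  obtain ⟨n, rfl⟩ : w ∈ Set.range (FreeMonoid.of a ^ ·) := by
    by_contra hw'
    have := coeff_mul_of_pow_eq_zero_of_commute h hw' 0
    rw [pow_zero, mul_one] at this
    exact Finsupp.mem_support_iff.mp hw this
  have hsingle : single (FreeMonoid.of a ^ n) (p.coeff (FreeMonoid.of a ^ n)) =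
      p.coeff (FreeMonoid.of a ^ n) • single (FreeMonoid.of a) 1 ^ n := by
    rw [single_pow, one_pow, smul_single', mul_one]
  rw [hsingle]
  exact Submodule.smul_mem _ _ (Submodule.subset_span ⟨n, rfl⟩)

end MonoidAlgebra

theorem Submodule.span_range_pow_eq_adjoin {R A : Type*} [CommSemiring R] [Semiring A]
    [Algebra R A] (x : A) :
    span R (Set.range (x ^ ·)) = Subalgebra.toSubmodule (Algebra.adjoin R {x}) := by
  rw [Algebra.adjoin_eq_span, ← Submonoid.powers_eq_closure, Submonoid.coe_powers]

/-- The kernel of `ad x : T → T` is exactly the polynomial subalgebra `K[x]`,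
i.e. the `K`-span of the powers of `x`. -/
theorem stmt9 :
    { p : T K | ⁅X K, p⁆ = 0 } =
      (Submodule.span K (Set.range fun n : ℕ => X K ^ n) : Set (T K)) := by
  ext p
  simp only [Set.mem_ofPred_eq, SetLike.mem_coe, Ring.lie_def, sub_eq_zero]
  refine ⟨fun h => MonoidAlgebra.mem_span_range_pow_of_commute h, fun hp => ?_⟩
  rw [Submodule.span_range_pow_eq_adjoin] at hp
  exact (Algebra.commute_of_mem_adjoin_self hp).eq

end
end

section
/- The kernel of the operator ad x restricted to the free Lie algebra L, i.e. {P ∈ L : [x,P] = 0}, is exactly the K-span of x. -/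
/-!
If `x` commutes with `P`, comparing the coefficients of `x * P` and `P * x` shows, by induction
on the number of trailing `x`'s, that every word containing `y` has coefficient zero in `P`; so
`P` is a polynomial in `x`, determined by its image under the substitution `x ↦ t`, `y ↦ 0` into
`K[t]`. That substitution is a Lie algebra map into a commutative algebra, so it sends `L` into
the span of its image of the generators, `K t`. Hence `P` is a multiple of `x`.
-/

noncomputable section

open scoped BigOperators

variable (K : Type) [Field K] [CharZero K]

attribute [local instance] LieRing.ofAssociativeRing

namespace FreeMonoid

variable {α : Type*}

theorem toList_of_pow (a : α) (n : ℕ) : (of a ^ n).toList = List.replicate n a := by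
  induction n with
  | zero => rfl
  | succ n ih => rw [pow_succ, toList_mul, ih, toList_of, List.replicate_succ']

theorem of_pow_injective (a : α) : Function.Injective (of a ^ · : ℕ → FreeMonoid α) :=
  fun m n h => by simpa [toList_of_pow] using congrArg (fun w => w.toList.length) h

theorem exists_eq_of_pow_or_exists_eq_mul_of_mul_of_pow (a : α) (w : FreeMonoid α) :
    (∃ n, w = of a ^ n) ∨ ∃ u b d, b ≠ a ∧ w = u * of b * of a ^ d := by
  induction w using FreeMonoid.inductionOn' with
  | one => exact .inl ⟨0, (pow_zero _).symm⟩
  | of_mul c w ih =>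
    rcases ih with ⟨n, rfl⟩ | ⟨u, b, d, hb, rfl⟩
    · by_cases hc : c = a
      · exact .inl ⟨n + 1, by rw [hc, pow_succ']⟩
      · exact .inr ⟨1, c, n, hc, by rw [one_mul]⟩
    · exact .inr ⟨of c * u, b, d, hb, by simp only [mul_assoc]⟩

end FreeMonoid

open FreeMonoid MonoidAlgebra

section Centralizer

variable {R α : Type*} [Semiring R]

theorem coeff_mul_of_mul_of_pow_eq_zero_of_commute {a : α} {P : MonoidAlgebra R (FreeMonoid α)}
    (h : Commute (single (of a) 1) P) {b : α} (hb : b ≠ a) (u : FreeMonoid α) (d : ℕ) :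
    P.coeff (u * of b * of a ^ d) = 0 := by
  have key : ∀ w, P.coeff w = (P * single (of a) 1).coeff (of a * w) := fun w => by
    rw [← h.eq, coeff_single_mul_mul, one_mul]
  induction d generalizing u with
  | zero =>
    rw [key, pow_zero, mul_one]
    refine coeff_mul_single_of_forall_mul_ne _ _ fun v hv => hb (Eq.symm ?_)
    simpa [List.getLast?_cons, List.getLast?_append] using congrArg (fun w => w.toList.getLast?) hv
  | succ d ih =>
    rw [key, pow_succ, ← mul_assoc, ← mul_assoc, coeff_mul_single_mul, mul_one]
    simpa only [mul_assoc] using ih (of a * u)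

end Centralizer

section ToPolynomial

variable {R α : Type*} [CommSemiring R] [DecidableEq α]

def toPolynomial (a : α) : MonoidAlgebra R (FreeMonoid α) →ₐ[R] Polynomial R :=
  MonoidAlgebra.lift R (Polynomial R) (FreeMonoid α) (FreeMonoid.lift (Pi.single a Polynomial.X))

theorem toPolynomial_single_of (a b : α) :
    toPolynomial a (single (of b) (1 : R)) =
      (Pi.single a Polynomial.X : α → Polynomial R) b := by
  rw [toPolynomial, lift_single, one_smul, lift_eval_of]

theorem coeff_toPolynomial (a : α) (P : MonoidAlgebra R (FreeMonoid α)) (m : ℕ) :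
    (toPolynomial a P).coeff m = P.coeff (of a ^ m) := by
  induction P using MonoidAlgebra.induction_linear with
  | zero => simp
  | add P Q hP hQ => simp [hP, hQ]
  | single w r =>
    classical
    rw [toPolynomial, lift_single, Polynomial.coeff_smul, coeff_single, Finsupp.single_apply,
      smul_eq_mul]
    rcases exists_eq_of_pow_or_exists_eq_mul_of_mul_of_pow a w with
      ⟨n, rfl⟩ | ⟨u, b, d, hb, rfl⟩
    · simp only [map_pow, lift_eval_of, Pi.single_eq_same, Polynomial.coeff_X_pow,
        (of_pow_injective a).eq_iff, eq_comm (a := n), mul_ite, mul_one, mul_zero]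
    · rw [map_mul, map_mul, lift_eval_of, Pi.single_eq_of_ne hb, mul_zero, zero_mul,
        Polynomial.coeff_zero, mul_zero, if_neg]
      intro h
      have hmem : b ∈ (of a ^ m).toList := by simp [← h]
      rw [toList_of_pow] at hmem
      exact hb (List.eq_of_mem_replicate hmem)

theorem eq_zero_of_commute_of_toPolynomial_eq_zero {a : α} {P : MonoidAlgebra R (FreeMonoid α)}
    (h : Commute (single (of a) 1) P) (hP : toPolynomial a P = 0) : P = 0 := by
  ext w
  rcases exists_eq_of_pow_or_exists_eq_mul_of_mul_of_pow a w with
    ⟨n, rfl⟩ | ⟨u, b, d, hb, rfl⟩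
  · rw [← coeff_toPolynomial, hP, Polynomial.coeff_zero, coeff_zero, Finsupp.zero_apply]
  · rw [coeff_mul_of_mul_of_pow_eq_zero_of_commute h hb, coeff_zero, Finsupp.zero_apply]

end ToPolynomial

theorem AlgHom.mem_span_image_of_mem_lieSpan {R A B : Type*} [CommRing R] [Ring A] [Algebra R A]
    [CommRing B] [Algebra R B] (f : A →ₐ[R] B) {s : Set A} {x : A}
    (hx : x ∈ LieSubalgebra.lieSpan R A s) : f x ∈ Submodule.span R (f '' s) := by
  have hmap : f x ∈ (LieSubalgebra.lieSpan R A s).map f.toLieHom :=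
    (LieSubalgebra.mem_map _ _ _).mpr ⟨x, hx, rfl⟩
  rwa [LieSubalgebra.map_lieSpan, ← LieSubalgebra.mem_toSubmodule,
    LieSubalgebra.coe_lieSpan_eq_span_of_forall_lie_eq_zero] at hmap
  intro y _ z _
  rw [Ring.lie_def, mul_comm, sub_self]

/-- The kernel of `ad x` restricted to the free Lie algebra `L` is exactly `K·x`. -/
theorem stmt10 :
    { P : T K | P ∈ L K ∧ ⁅X K, P⁆ = 0 } =
      (Submodule.span K {X K} : Set (T K)) := by
  ext P
  constructor
  · rintro ⟨hPL, hP⟩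
    have hcomm : Commute (X K) P := sub_eq_zero.mp hP
    have hspan : toPolynomial 0 P ∈ Submodule.span K {Polynomial.X} := by
      have h := (toPolynomial 0).mem_span_image_of_mem_lieSpan hPL
      rwa [Set.image_pair, X, Y, word, word, ofList_singleton, ofList_singleton,
        toPolynomial_single_of, toPolynomial_single_of, Pi.single_eq_same,
        Pi.single_eq_of_ne one_ne_zero, Set.pair_comm, Submodule.span_insert_zero] at h
    obtain ⟨c, hc⟩ := Submodule.mem_span_singleton.mp hspan
    have hX : toPolynomial 0 (X K) = Polynomial.X := toPolynomial_single_of 0 0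
    have hzero : P - c • X K = 0 :=
      eq_zero_of_commute_of_toPolynomial_eq_zero (hcomm.sub_right ((Commute.refl _).smul_right c))
        (by rw [map_sub, map_smul, hX, hc, sub_self])
    exact Submodule.mem_span_singleton.mpr ⟨c, (sub_eq_zero.mp hzero).symm⟩
  · intro hP
    obtain ⟨c, rfl⟩ := Submodule.mem_span_singleton.mp hP
    exact ⟨(L K).smul_mem c (LieSubalgebra.subset_lieSpan (Set.mem_insert _ _)),
      by rw [lie_smul, lie_self, smul_zero]⟩

end
end
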